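/- Let E be a pseudo effect algebra satisfying (RDP). If m₁ and m₂ are σ-additive measures on E, then the lattice operations m₁ ⋁ m₂ and m₁ ⋀ m₂ in J(E) are again σ-additive measures. -/

import Mathlib

/-- A pseudo effect algebra: a partial algebra `(E; +, 0, 1)` where the partial
addition is encoded as `padd : E → E → Option E` (`padd a b = some c` means
`a + b` is defined and equals `c`). -/
class PseudoEffectAlgebra (E : Type) where
  padd : E → E → Option E
  pzero : E
  pone : E
  /-- (i) `a+b` and `(a+b)+c` exist iff `b+c` and `a+(b+c)` exist ... -/
  assoc_defined : ∀ a b c : E,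
    (∃ x, padd a b = some x ∧ (padd x c).isSome) ↔
      (∃ y, padd b c = some y ∧ (padd a y).isSome)
  /-- ... and in this case `(a+b)+c = a+(b+c)`. -/
  assoc_eq : ∀ a b c x y : E, padd a b = some x → padd b c = some y →
    padd x c = padd a y
  /-- (ii) there is exactly one `d` with `a + d = 1`. -/
  exists_unique_right : ∀ a : E, ∃! d, padd a d = some pone
  /-- (ii) there is exactly one `e` with `e + a = 1`. -/
  exists_unique_left : ∀ a : E, ∃! e, padd e a = some pone
  /-- (iii) if `a+b` exists, there are `d, e` with `a+b = d+a = b+e`. -/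
  shift : ∀ a b c : E, padd a b = some c →
    ∃ d e, padd d a = some c ∧ padd b e = some c
  /-- (iv) if `1+a` exists then `a = 0`. -/
  one_add : ∀ a : E, (padd pone a).isSome → a = pzero
  /-- (iv) if `a+1` exists then `a = 0`. -/
  add_one : ∀ a : E, (padd a pone).isSome → a = pzero

namespace PseudoEffectAlgebra

variable {E : Type} [PseudoEffectAlgebra E]

/-- The induced partial order: `a ≤ b` iff `b = a + c` for some `c ∈ E`. -/
def pLe (a b : E) : Prop := ∃ c, padd a c = some b

/-- The Riesz Decomposition Property (RDP). -/
def RDP (E : Type) [PseudoEffectAlgebra E] : Prop :=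
  ∀ a₁ a₂ b₁ b₂ c : E, padd a₁ a₂ = some c → padd b₁ b₂ = some c →
    ∃ d₁ d₂ d₃ d₄ : E, padd d₁ d₂ = some a₁ ∧ padd d₃ d₄ = some a₂ ∧
      padd d₁ d₃ = some b₁ ∧ padd d₂ d₄ = some b₂

/-- A signed measure on `E`. -/
def IsSignedMeasure (m : E → ℝ) : Prop :=
  ∀ a b c : E, padd a b = some c → m c = m a + m b

/-- A (positive) measure on `E`. -/
def IsMeasure (m : E → ℝ) : Prop :=
  IsSignedMeasure m ∧ ∀ a : E, 0 ≤ m a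

/-- A state on `E`. -/
def IsState (s : E → ℝ) : Prop := IsMeasure s ∧ s pone = 1

/-- A Jordan signed measure: a difference of two measures. -/
def IsJordan (m : E → ℝ) : Prop :=
  ∃ m₁ m₂ : E → ℝ, IsMeasure m₁ ∧ IsMeasure m₂ ∧ m = m₁ - m₂

/-- `m ≤⁺ m'` iff `m' - m` is a (positive) measure. -/
def MLe (m m' : E → ℝ) : Prop := IsMeasure (m' - m)

/-- The (partial) sum `x₁ + ⋯ + xₙ` of a nonempty list of elements of `E`. -/
def lsum : List E → Option E
  | [] => some pzero
  | [a] => some a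
  | a :: b :: l => (lsum (b :: l)).bind (fun s => padd a s)

/-- `m` is the supremum, in the po-group `J(E)` of Jordan signed measures ordered
by `≤⁺`, of the set `S`. -/
def IsSupIn (S : Set (E → ℝ)) (m : E → ℝ) : Prop :=
  IsJordan m ∧ (∀ t ∈ S, MLe t m) ∧
    ∀ h : E → ℝ, IsJordan h → (∀ t ∈ S, MLe t h) → MLe m h

/-- `m` is the infimum, in the po-group `J(E)` of Jordan signed measures ordered
by `≤⁺`, of the set `S`. -/
def IsInfIn (S : Set (E → ℝ)) (m : E → ℝ) : Prop :=
  IsJordan m ∧ (∀ t ∈ S, MLe m t) ∧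
    ∀ h : E → ℝ, IsJordan h → (∀ t ∈ S, MLe h t) → MLe h m

/-- `b` is the least upper bound (in the order of `E`) of the set `S ⊆ E`. -/
def IsLubE (S : Set E) (b : E) : Prop :=
  (∀ a ∈ S, pLe a b) ∧ ∀ c : E, (∀ a ∈ S, pLe a c) → pLe b c

/-- A σ-additive signed measure: if `a₁ ≤ a₂ ≤ ⋯` and `a = ⋁ₙ aₙ` exists in `E`,
then `m(a) = limₙ m(aₙ)`. -/
def SigmaAdditive (m : E → ℝ) : Prop :=
  ∀ (a : ℕ → E) (b : E), (∀ n, pLe (a n) (a (n + 1))) → IsLubE (Set.range a) b →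
    Filter.Tendsto (fun n => m (a n)) Filter.atTop (nhds (m b))

/-! Both lattice operations are squeezed between measures whose σ-additivity is known:
`m₁ ≤⁺ m₁ ⋁ m₂ ≤⁺ m₁ + m₂` and `0 ≤⁺ m₁ ⋀ m₂ ≤⁺ m₁`. A measure lying below a σ-additive
measure is σ-additive, because along an increasing chain with supremum `b` both it and
the difference are monotone and bounded by their values at `b`. -/

theorem IsMeasure.mono {m : E → ℝ} (hm : IsMeasure m) {a b : E} (h : pLe a b) :
    m a ≤ m b := by
  obtain ⟨c, hc⟩ := h
  linarith [hm.1 a c b hc, hm.2 c]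

theorem isMeasure_zero : IsMeasure (0 : E → ℝ) :=
  ⟨fun _ _ _ _ => by simp, fun _ => le_rfl⟩

theorem IsMeasure.add {m m' : E → ℝ} (hm : IsMeasure m) (hm' : IsMeasure m') :
    IsMeasure (m + m') :=
  ⟨fun a b c hc => by simp only [Pi.add_apply, hm.1 a b c hc, hm'.1 a b c hc]; ring,
    fun a => add_nonneg (hm.2 a) (hm'.2 a)⟩

theorem IsMeasure.isJordan {m : E → ℝ} (hm : IsMeasure m) : IsJordan m :=
  ⟨m, 0, hm, isMeasure_zero, (sub_zero m).symm⟩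

theorem zero_mLe_iff {m : E → ℝ} : MLe 0 m ↔ IsMeasure m := by
  rw [MLe, sub_zero]

theorem mLe_add_right {m m' : E → ℝ} (hm' : IsMeasure m') : MLe m (m + m') := by
  rwa [MLe, add_sub_cancel_left]

theorem mLe_add_left {m m' : E → ℝ} (hm' : IsMeasure m') : MLe m (m' + m) := by
  rwa [MLe, add_sub_cancel_right]

theorem IsMeasure.of_mLe {m v : E → ℝ} (hm : IsMeasure m) (h : MLe m v) : IsMeasure v := by
  simpa using hm.add h

theorem SigmaAdditive.add {m m' : E → ℝ} (hm : SigmaAdditive m) (hm' : SigmaAdditive m') :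
    SigmaAdditive (m + m') := fun a b hmono hlub =>
  (hm a b hmono hlub).add (hm' a b hmono hlub)

theorem SigmaAdditive.of_mLe {v m : E → ℝ} (hm : SigmaAdditive m) (hv : IsMeasure v)
    (hvm : MLe v m) : SigmaAdditive v := by
  intro a b hmono hlub
  have hle : ∀ n, pLe (a n) b := fun n => hlub.1 _ ⟨n, rfl⟩
  have hlower : ∀ n, m (a n) - (m - v) b ≤ v (a n) := fun n => by
    have := hvm.mono (hle n)
    simp only [Pi.sub_apply] at this ⊢
    linarith
  have hlim : Filter.Tendsto (fun n => m (a n) - (m - v) b) Filter.atTop (nhds (v b)) := by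
    simpa using (hm a b hmono hlub).sub_const ((m - v) b)
  exact tendsto_of_tendsto_of_tendsto_of_le_of_le hlim tendsto_const_nhds hlower
    fun n => hv.mono (hle n)

theorem stmt11_general (m₁ m₂ : E → ℝ)
    (h₁ : IsMeasure m₁) (h₂ : IsMeasure m₂)
    (hσ₁ : SigmaAdditive m₁) (hσ₂ : SigmaAdditive m₂) :
    (∀ v : E → ℝ, IsSupIn {m₁, m₂} v → IsMeasure v ∧ SigmaAdditive v) ∧
    (∀ w : E → ℝ, IsInfIn {m₁, m₂} w → IsMeasure w ∧ SigmaAdditive w) := by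
  refine ⟨fun v ⟨_, hub, hleast⟩ => ?_, fun w ⟨_, hlb, hgreat⟩ => ?_⟩
  · have hv : IsMeasure v := h₁.of_mLe (hub m₁ (by simp))
    have hv_le_sum : MLe v (m₁ + m₂) := hleast _ (h₁.add h₂).isJordan <| by
      simpa using ⟨mLe_add_right h₂, mLe_add_left h₁⟩
    exact ⟨hv, (hσ₁.add hσ₂).of_mLe hv hv_le_sum⟩
  · have hw : IsMeasure w := zero_mLe_iff.1 <| hgreat 0 isMeasure_zero.isJordan <| by
      simpa [zero_mLe_iff] using ⟨h₁, h₂⟩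
    exact ⟨hw, hσ₁.of_mLe hw (hlb m₁ (by simp))⟩

/-- Proposition 4.5: if `m₁, m₂` are σ-additive measures on a
pseudo effect algebra with (RDP), then `m₁ ⋁ m₂` and `m₁ ⋀ m₂` (the lattice
operations of `J(E)`) are again σ-additive measures. -/
theorem stmt11 (hRDP : RDP E) (m₁ m₂ : E → ℝ)
    (h₁ : IsMeasure m₁) (h₂ : IsMeasure m₂)
    (hσ₁ : SigmaAdditive m₁) (hσ₂ : SigmaAdditive m₂) :
    (∀ v : E → ℝ, IsSupIn {m₁, m₂} v → IsMeasure v ∧ SigmaAdditive v) ∧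
    (∀ w : E → ℝ, IsInfIn {m₁, m₂} w → IsMeasure w ∧ SigmaAdditive w) :=
  stmt11_general m₁ m₂ h₁ h₂ hσ₁ hσ₂

end PseudoEffectAlgebra
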